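/- arXiv:2309.08383 — 10 statements merged into one kernel-verified Lean document; each statement's English description precedes it below -/
import Mathlib

section
/- Consider system (2) with parameters a,b,c,k,m > 0. If x,y : ℝ → ℝ are differentiable and satisfy x'(t) = F(x(t),y(t)) and y'(t) = G(x(t),y(t)) for all t ≥ 0, with x(0) > 0 and y(0) > 0, then x(t) > 0 and y(t) > 0 for all t ≥ 0. -/
open Set

/-! Both `x` and `y` satisfy a scalar linear equation `z' = z · g(t)` whose coefficient is
continuous along the solution, so neither can reach `0` in finite time: by uniqueness for the
linear equation, a zero at time `t` would force `z ≡ 0` on `[0, t]`. For `y` the coefficient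
involves `1 / (1 + k x)`, which is continuous once `x` is known to stay positive. -/

section LinearScalarODE

variable {z g : ℝ → ℝ} {a b : ℝ}

theorem eqOn_zero_of_hasDerivAt_eq_mul (hg : ContinuousOn g (Icc a b))
    (hz : ∀ t ∈ Icc a b, HasDerivAt z (z t * g t) t) (hb : z b = 0) :
    EqOn z 0 (Icc a b) := by
  obtain ⟨K, hK⟩ := isCompact_Icc.exists_bound_of_continuousOn hg
  have hLip : ∀ t ∈ Ioc a b, LipschitzOnWith (Real.toNNReal K) (fun w : ℝ => w * g t) univ := by
    intro t ht
    refine (LipschitzWith.of_dist_le_mul fun v w => ?_).lipschitzOnWith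
    rw [Real.dist_eq, Real.dist_eq, ← sub_mul, abs_mul, mul_comm]
    exact mul_le_mul_of_nonneg_right ((Real.norm_eq_abs _ ▸ hK t (Ioc_subset_Icc_self ht)).trans
      (Real.le_coe_toNNReal K)) (abs_nonneg _)
  refine ODE_solution_unique_of_mem_Icc_left hLip
    (fun t ht => (hz t ht).continuousAt.continuousWithinAt)
    (fun t ht => (hz t (Ioc_subset_Icc_self ht)).hasDerivWithinAt) (fun _ _ => mem_univ _)
    continuousOn_const (fun t _ => (hasDerivWithinAt_const t _ (0 : ℝ)).congr_deriv (by simp))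
    (fun _ _ => mem_univ _) hb

theorem pos_of_hasDerivAt_eq_mul (hab : a ≤ b) (hg : ContinuousOn g (Icc a b))
    (hz : ∀ t ∈ Icc a b, HasDerivAt z (z t * g t) t) (ha : 0 < z a) : 0 < z b := by
  by_contra! hb
  obtain ⟨c, hc, hzc⟩ : (0 : ℝ) ∈ z '' Icc a b :=
    intermediate_value_Icc' hab (fun t ht => (hz t ht).continuousAt.continuousWithinAt)
      ⟨hb, ha.le⟩
  have hac : Icc a c ⊆ Icc a b := Icc_subset_Icc_right hc.2
  exact ha.ne' <| eqOn_zero_of_hasDerivAt_eq_mul (hg.mono hac) (fun t ht => hz t (hac ht)) hzc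
    (left_mem_Icc.2 hc.1)

end LinearScalarODE

theorem positivity_of_solutions_general
    (a b c k m : ℝ)
    (hk : 0 < k) (x y : ℝ → ℝ)
    (hx : Differentiable ℝ x) (hy : Differentiable ℝ y)
    (hxeq : ∀ t ≥ (0 : ℝ), deriv x t = b * x t * (1 - x t - c * y t))
    (hyeq : ∀ t ≥ (0 : ℝ), deriv y t =
      y t * (1 / (1 + k * x t) - y t - a * x t - m * x t * y t))
    (hx0 : 0 < x 0) (hy0 : 0 < y 0) :
    ∀ t ≥ (0 : ℝ), 0 < x t ∧ 0 < y t := by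
  have hxc := hx.continuous
  have hyc := hy.continuous
  have hx_pos : ∀ t ≥ (0 : ℝ), 0 < x t := fun t ht =>
    pos_of_hasDerivAt_eq_mul (g := fun u => b * (1 - x u - c * y u)) ht
      (by fun_prop) (fun u hu =>
        (hx u).hasDerivAt.congr_deriv (by rw [hxeq u hu.1]; ring)) hx0
  refine fun t ht => ⟨hx_pos t ht, ?_⟩
  refine pos_of_hasDerivAt_eq_mul
    (g := fun u => 1 / (1 + k * x u) - y u - a * x u - m * x u * y u) ht ?_
    (fun u hu => hyeq u hu.1 ▸ (hy u).hasDerivAt) hy0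
  refine fun u hu => ContinuousAt.continuousWithinAt ?_
  have hden : 1 + k * x u ≠ 0 := by have := hx_pos u hu.1; positivity
  fun_prop (disch := exact hden)

/-- **Positivity of solutions of system (2).**
System (2) is x' = b·x·(1 − x − c·y), y' = y·(1/(1+k·x) − y − a·x − m·x·y)
with positive parameters a, b, c, k, m.  If the initial data are positive,
then the solution stays positive for all t ≥ 0. -/
theorem positivity_of_solutions
    (a b c k m : ℝ) (ha : 0 < a) (hb : 0 < b) (hc : 0 < c)
    (hk : 0 < k) (hm : 0 < m) (x y : ℝ → ℝ)
    (hx : Differentiable ℝ x) (hy : Differentiable ℝ y)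
    (hxeq : ∀ t ≥ (0 : ℝ), deriv x t = b * x t * (1 - x t - c * y t))
    (hyeq : ∀ t ≥ (0 : ℝ), deriv y t =
      y t * (1 / (1 + k * x t) - y t - a * x t - m * x t * y t))
    (hx0 : 0 < x 0) (hy0 : 0 < y 0) :
    ∀ t ≥ (0 : ℝ), 0 < x t ∧ 0 < y t :=
  positivity_of_solutions_general a b c k m hk x y hx hy hxeq hyeq hx0 hy0
end

section
/- Let a, b > 0 and let x : ℝ → ℝ be differentiable with x(t) > 0 for all t ≥ 0. If x'(t) ≤ x(t)·(a − b·x(t)) for all t ≥ 0, then limsup_{t→∞} x(t) ≤ a/b. -/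
/-!
Fix `c > a / b`. Wherever `x ≥ c`, the right-hand side `x (a - b x)` is at most `c (a - b c) < 0`,
so `x` decreases at a uniform rate while it stays above `c`. Hence `x` cannot stay above `c`
forever, and once it is at or below `c` it cannot cross the level `c` again. Thus `x ≤ c`
eventually, and letting `c ↓ a / b` bounds the limsup.
-/

open Filter Set

theorem le_of_deriv_neg_of_eq {f : ℝ → ℝ} {t₀ c t : ℝ} (hf : Differentiable ℝ f)
    (h₀ : f t₀ ≤ c) (hc : ∀ s ≥ t₀, f s = c → deriv f s < 0) (ht : t₀ ≤ t) : f t ≤ c :=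
  image_le_of_deriv_right_lt_deriv_boundary hf.continuous.continuousOn
    (fun s _ => (hf s).hasDerivAt.hasDerivWithinAt) h₀ (fun s => hasDerivAt_const s c)
    (fun s hs hfs => hc s hs.1 hfs) ⟨ht, le_rfl⟩

theorem tendsto_atBot_of_deriv_le_neg {f : ℝ → ℝ} {t₀ δ : ℝ} (hf : Differentiable ℝ f)
    (hδ : 0 < δ) (h : ∀ t ≥ t₀, deriv f t ≤ -δ) : Tendsto f atTop atBot := by
  have hlin : ∀ t ≥ t₀, f t ≤ f t₀ + δ * t₀ + -δ * t := fun t ht => by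
    have := (convex_Ici t₀).image_sub_le_mul_sub_of_deriv_le hf.continuous.continuousOn
      (fun s _ => (hf s).differentiableWithinAt)
      (fun s hs => h s (interior_subset hs)) t₀ self_mem_Ici t ht ht
    linarith
  refine tendsto_atBot_mono' atTop (eventually_ge_atTop t₀ |>.mono hlin) ?_
  exact tendsto_atBot_add_const_left _ _ (tendsto_id.const_mul_atTop_of_neg (neg_neg_of_pos hδ))

theorem eventually_le_of_deriv_le_neg {f : ℝ → ℝ} {t₀ c δ : ℝ} (hf : Differentiable ℝ f)
    (hδ : 0 < δ) (h : ∀ t ≥ t₀, c ≤ f t → deriv f t ≤ -δ) : ∀ᶠ t in atTop, f t ≤ c := by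
  obtain ⟨s, hs, hfs⟩ : ∃ s ≥ t₀, f s ≤ c := by
    by_contra! hgt
    have hbot := tendsto_atBot_of_deriv_le_neg hf hδ fun t ht => h t ht (hgt t ht).le
    obtain ⟨t, hft, ht⟩ := ((hbot.eventually (eventually_le_atBot c)).and
      (eventually_ge_atTop t₀)).exists
    exact (hgt t ht).not_ge hft
  filter_upwards [eventually_ge_atTop s] with t ht
  exact le_of_deriv_neg_of_eq hf hfs
    (fun r hr hfr => (h r (hs.trans hr) hfr.ge).trans_lt (neg_neg_of_pos hδ)) ht

theorem logistic_le_of_le {a b c y : ℝ} (hb : 0 ≤ b) (hc : 0 ≤ c) (hac : a ≤ b * c)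
    (hcy : c ≤ y) : y * (a - b * y) ≤ c * (a - b * c) := by
  nlinarith [mul_nonneg hb (hc.trans hcy)]

/-- **Comparison lemma (upper bound).**
If a, b > 0, x is differentiable and positive on [0,∞), and
x'(t) ≤ x(t)·(a − b·x(t)) for all t ≥ 0, then limsup_{t→∞} x(t) ≤ a/b. -/
theorem limsup_le_of_logistic_upper
    (a b : ℝ) (ha : 0 < a) (hb : 0 < b) (x : ℝ → ℝ)
    (hx : Differentiable ℝ x) (hpos : ∀ t ≥ (0 : ℝ), 0 < x t)
    (hineq : ∀ t ≥ (0 : ℝ), deriv x t ≤ x t * (a - b * x t)) :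
    Filter.limsup x Filter.atTop ≤ a / b := by
  have hcobdd : IsCoboundedUnder (· ≤ ·) atTop x :=
    isCoboundedUnder_le_of_eventually_le atTop
      (eventually_ge_atTop 0 |>.mono fun t ht => (hpos t ht).le)
  refine le_of_forall_pos_le_add fun ε hε => ?_
  set c := a / b + ε
  have hc : 0 < c := by positivity
  have hac : a < b * c := by
    rw [mul_add, mul_div_cancel₀ _ hb.ne']
    linarith [mul_pos hb hε]
  refine limsup_le_of_le hcobdd (eventually_le_of_deriv_le_neg (t₀ := 0) hx
    (mul_pos hc (sub_pos.2 hac)) fun t ht hct => ?_)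
  calc deriv x t ≤ x t * (a - b * x t) := hineq t ht
    _ ≤ c * (a - b * c) := logistic_le_of_le hb.le hc.le hac.le hct
    _ = -(c * (b * c - a)) := by ring
end

section
/- Consider system (2) with parameters a,b,c,k,m > 0 and assume 0 < c < 1. If x,y : ℝ → ℝ are differentiable, satisfy x'(t) = F(x(t),y(t)) and y'(t) = G(x(t),y(t)) for all t ≥ 0, and x(t) > 0, y(t) > 0 for all t ≥ 0, then liminf_{t→∞} x(t) ≥ 1 − c. -/
/-!
Both populations are eventually below any level above 1, because each satisfies a logistic
inequality `f' ≤ β f (1 - f)`. Once `y ≤ Y` with `c Y < 1`, the first equation gives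
`x' ≥ b (1 - c Y - r) x` whenever `x ≤ r`, so `x` rises above any `r < 1 - c Y`; letting `Y ↓ 1`
gives the bound `1 - c`. Each "eventually" is a barrier argument: a differentiable function
cannot cross a level at which its derivative points back.
-/

open Filter Set

section Comparison

variable {f : ℝ → ℝ} {A μ δ β : ℝ}

theorem ge_of_deriv_pos_of_eq (hf : Differentiable ℝ f) (hA : μ ≤ f A)
    (hd : ∀ t ≥ A, f t = μ → 0 < deriv f t) : ∀ t ≥ A, μ ≤ f t := fun _ ht =>
  image_le_of_deriv_right_lt_deriv_boundary (f := fun _ => μ) (f' := fun _ => 0)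
    continuousOn_const (fun _ _ => hasDerivWithinAt_const _ _ _) hA
    (fun s => (hf s).hasDerivAt) (fun s hs hs' => hd s hs.1 hs'.symm) ⟨ht, le_rfl⟩

theorem exists_ge_of_le_deriv (hf : Differentiable ℝ f) (hδ : 0 < δ)
    (hd : ∀ t ≥ A, f t ≤ μ → δ ≤ deriv f t) : ∃ T ≥ A, μ ≤ f T := by
  by_contra! hlt
  have hgrowth : ∀ t ∈ interior (Ici A), δ ≤ deriv f t := fun t ht =>
    hd t (interior_subset ht) (hlt t (interior_subset ht)).le
  have hq : 0 ≤ (μ - f A) / δ := div_nonneg (by linarith [hlt A le_rfl]) hδ.le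
  have hAT : A ≤ A + (μ - f A) / δ + 1 := by linarith
  have hmvt := (convex_Ici A).mul_sub_le_image_sub_of_le_deriv hf.continuous.continuousOn
    hf.differentiableOn hgrowth A self_mem_Ici _ hAT hAT
  have hδq : δ * ((μ - f A) / δ) = μ - f A := mul_div_cancel₀ _ hδ.ne'
  linarith [hlt _ hAT]

theorem eventually_ge_of_le_deriv (hf : Differentiable ℝ f) (hδ : 0 < δ)
    (hd : ∀ t ≥ A, f t ≤ μ → δ ≤ deriv f t) : ∀ᶠ t in atTop, μ ≤ f t := by
  obtain ⟨T, hAT, hT⟩ := exists_ge_of_le_deriv hf hδ hd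
  have hstay := ge_of_deriv_pos_of_eq hf hT fun t ht htμ =>
    hδ.trans_le (hd t (hAT.trans ht) htμ.le)
  exact eventually_atTop.2 ⟨T, hstay⟩

theorem eventually_le_of_deriv_le (hf : Differentiable ℝ f) (hδ : 0 < δ)
    (hd : ∀ t ≥ A, μ ≤ f t → deriv f t ≤ -δ) : ∀ᶠ t in atTop, f t ≤ μ := by
  have hneg := eventually_ge_of_le_deriv (f := -f) (A := A) (μ := -μ) hf.neg hδ
    fun t ht hfμ => by
      rw [Pi.neg_apply] at hfμ
      rw [deriv.neg]
      linarith [hd t ht (by linarith)]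
  filter_upwards [hneg] with t ht using neg_le_neg_iff.1 ht

theorem eventually_le_of_deriv_le_logistic (hf : Differentiable ℝ f) (hβ : 0 < β)
    (hd : ∀ t ≥ A, deriv f t ≤ β * f t * (1 - f t)) {Y : ℝ} (hY : 1 < Y) :
    ∀ᶠ t in atTop, f t ≤ Y := by
  refine eventually_le_of_deriv_le hf (mul_pos (mul_pos hβ (by linarith)) (sub_pos.2 hY))
    fun t ht hYf => (hd t ht).trans ?_
  have : f t * (1 - f t) ≤ Y * (1 - Y) := by nlinarith
  nlinarith

-- The barrier at `min (f A) r` keeps `f` bounded away from `0`, which makes the growth uniform.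
theorem eventually_ge_of_mul_le_deriv (hf : Differentiable ℝ f) (hβ : 0 < β) (hA : 0 < f A)
    {r : ℝ} (hr : 0 < r) (hd : ∀ t ≥ A, f t ≤ r → β * f t ≤ deriv f t) :
    ∀ᶠ t in atTop, r ≤ f t := by
  have hμ : 0 < min (f A) r := lt_min hA hr
  have hlow := ge_of_deriv_pos_of_eq hf (min_le_left _ _) fun t ht hfμ =>
    (mul_pos hβ (hfμ ▸ hμ)).trans_le (hd t ht (hfμ ▸ min_le_right _ _))
  exact eventually_ge_of_le_deriv hf (mul_pos hβ hμ) fun t ht hfr =>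
    (mul_le_mul_of_nonneg_left (hlow t ht) hβ.le).trans (hd t ht hfr)

end Comparison

section System

variable {a b c k m : ℝ} {x y : ℝ → ℝ}

theorem deriv_x_le_logistic (hb : 0 ≤ b) (hc : 0 ≤ c)
    (hxeq : ∀ t ≥ (0 : ℝ), deriv x t = b * x t * (1 - x t - c * y t))
    (hxpos : ∀ t ≥ (0 : ℝ), 0 < x t) (hypos : ∀ t ≥ (0 : ℝ), 0 < y t) :
    ∀ t ≥ (0 : ℝ), deriv x t ≤ b * x t * (1 - x t) := fun t ht => by
  rw [hxeq t ht]
  have := mul_nonneg (mul_nonneg hb (hxpos t ht).le) (mul_nonneg hc (hypos t ht).le)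
  nlinarith

theorem deriv_y_le_logistic (ha : 0 ≤ a) (hk : 0 ≤ k) (hm : 0 ≤ m)
    (hyeq : ∀ t ≥ (0 : ℝ), deriv y t =
      y t * (1 / (1 + k * x t) - y t - a * x t - m * x t * y t))
    (hxpos : ∀ t ≥ (0 : ℝ), 0 < x t) (hypos : ∀ t ≥ (0 : ℝ), 0 < y t) :
    ∀ t ≥ (0 : ℝ), deriv y t ≤ y t * (1 - y t) := fun t ht => by
  have hx := hxpos t ht
  have hy := hypos t ht
  have hfrac : 1 / (1 + k * x t) ≤ 1 := div_le_one_of_le₀ (by nlinarith) (by positivity)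
  have : 1 / (1 + k * x t) - y t - a * x t - m * x t * y t ≤ 1 - y t := by
    nlinarith [mul_nonneg ha hx.le, mul_nonneg (mul_nonneg hm hx.le) hy.le]
  rw [hyeq t ht]
  exact mul_le_mul_of_nonneg_left this hy.le

theorem eventually_x_ge_of_eventually_y_le (hb : 0 < b) (hc : 0 ≤ c) (hx : Differentiable ℝ x)
    (hxeq : ∀ t ≥ (0 : ℝ), deriv x t = b * x t * (1 - x t - c * y t))
    (hxpos : ∀ t ≥ (0 : ℝ), 0 < x t) {Y r : ℝ} (hyY : ∀ᶠ t in atTop, y t ≤ Y)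
    (hr : 0 < r) (hrY : r < 1 - c * Y) : ∀ᶠ t in atTop, r ≤ x t := by
  obtain ⟨T, hT⟩ := eventually_atTop.1 (hyY.and (eventually_ge_atTop 0))
  have hT0 : 0 ≤ T := (hT T le_rfl).2
  refine eventually_ge_of_mul_le_deriv hx (mul_pos hb (by linarith : 0 < 1 - c * Y - r))
    (hxpos T hT0) hr fun t ht hxr => ?_
  have hcy : c * y t ≤ c * Y := mul_le_mul_of_nonneg_left (hT t ht).1 hc
  rw [hxeq t (hT0.trans ht), mul_right_comm]
  exact mul_le_mul_of_nonneg_left (by linarith) (mul_nonneg hb.le (hxpos t (hT0.trans ht)).le)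

end System

theorem liminf_x_ge_of_system_general
    (a b c k m : ℝ) (ha : 0 < a) (hb : 0 < b) (hc : 0 < c)
    (hk : 0 < k) (hm : 0 < m) (x y : ℝ → ℝ)
    (hx : Differentiable ℝ x) (hy : Differentiable ℝ y)
    (hxeq : ∀ t ≥ (0 : ℝ), deriv x t = b * x t * (1 - x t - c * y t))
    (hyeq : ∀ t ≥ (0 : ℝ), deriv y t =
      y t * (1 / (1 + k * x t) - y t - a * x t - m * x t * y t))
    (hxpos : ∀ t ≥ (0 : ℝ), 0 < x t) (hypos : ∀ t ≥ (0 : ℝ), 0 < y t) :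
    1 - c ≤ Filter.liminf x Filter.atTop := by
  have hcob : IsCoboundedUnder (· ≥ ·) atTop x := isCoboundedUnder_ge_of_eventually_le atTop
    (eventually_le_of_deriv_le_logistic hx hb (deriv_x_le_logistic hb.le hc.le hxeq hxpos hypos)
      one_lt_two)
  refine le_of_forall_lt_imp_le_of_dense fun r hr => le_liminf_of_le hcob ?_
  rcases le_or_gt r 0 with hr0 | hr0
  · filter_upwards [eventually_ge_atTop 0] with t ht using hr0.trans (hxpos t ht).le
  obtain ⟨Y, hY, hcY⟩ : ∃ Y, 1 < Y ∧ c * Y < 1 - r := ⟨(1 - r + c) / (2 * c), by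
    rw [lt_div_iff₀ (by positivity)]; linarith, by
    rw [mul_div_assoc', div_lt_iff₀ (by positivity)]; nlinarith⟩
  have hyY := eventually_le_of_deriv_le_logistic hy one_pos
    (fun t ht => (deriv_y_le_logistic ha.le hk.le hm.le hyeq hxpos hypos t ht).trans_eq
      (by ring)) hY
  exact eventually_x_ge_of_eventually_y_le hb hc.le hx hxeq hxpos hyY hr0 (by linarith)

/-- **Persistence of the first species in system (2).**
For positive solutions of x' = b·x·(1 − x − c·y),
y' = y·(1/(1+k·x) − y − a·x − m·x·y) with a,b,c,k,m > 0 and 0 < c < 1,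
we have liminf_{t→∞} x(t) ≥ 1 − c. -/
theorem liminf_x_ge_of_system
    (a b c k m : ℝ) (ha : 0 < a) (hb : 0 < b) (hc : 0 < c) (hc1 : c < 1)
    (hk : 0 < k) (hm : 0 < m) (x y : ℝ → ℝ)
    (hx : Differentiable ℝ x) (hy : Differentiable ℝ y)
    (hxeq : ∀ t ≥ (0 : ℝ), deriv x t = b * x t * (1 - x t - c * y t))
    (hyeq : ∀ t ≥ (0 : ℝ), deriv y t =
      y t * (1 / (1 + k * x t) - y t - a * x t - m * x t * y t))
    (hxpos : ∀ t ≥ (0 : ℝ), 0 < x t) (hypos : ∀ t ≥ (0 : ℝ), 0 < y t) :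
    1 - c ≤ Filter.liminf x Filter.atTop :=
  liminf_x_ge_of_system_general a b c k m ha hb hc hk hm x y hx hy hxeq hyeq hxpos hypos
end

section
/- Let a,b,c,k,m > 0, let 0 < x < 1, set y = (1−x)/c, and suppose u(x) = 0 (so (x,y) is a positive equilibrium of system (2)). Then the determinant of the Jacobian J(x,y) of system (2) satisfies det J(x,y) = −(x·(x−1)·b/((k·x+1)·c))·v(x), where v(X) = 3·A1·X² + 2·A2·X + A3 is the derivative of the cubic u. -/
/-- The cubic associated to the positive equilibria of system (2). -/
noncomputable def ucubic (a c k m X : ℝ) : ℝ :=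
  k * m * X ^ 3 + ((-(a * c) - m + 1) * k + m) * X ^ 2 +
    (-(a * c) - k - m + 1) * X + (c - 1)

/-- The derivative v = u' of the associated cubic. -/
noncomputable def vquad (a c k m X : ℝ) : ℝ :=
  3 * (k * m) * X ^ 2 + 2 * ((-(a * c) - m + 1) * k + m) * X +
    (-(a * c) - k - m + 1)

/-- The Jacobian matrix of system (2) at the point (x,y). -/
noncomputable def systemJacobian (a b c k m x y : ℝ) : Matrix (Fin 2) (Fin 2) ℝ :=
  !![-b * (2 * x + c * y - 1), -b * c * x;
     -y * (k / (1 + k * x) ^ 2 + a + m * y),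
       1 / (1 + k * x) - (2 * m * y + a) * x - 2 * y]

/- Along the prey nullcline y = (1 - x)/c put φ(x) = g(x, (1 - x)/c), where g = G/y is the
predator's per-capita growth rate. Then u = c(1 + kx)·φ, and the Jacobian's determinant there is
b·x·(1 - x)·φ' - b·x·φ; substituting φ = u/(c(1 + kx)) gives the two terms below. -/
theorem det_systemJacobian_on_prey_nullcline (a b c k m x : ℝ) (hc : c ≠ 0)
    (hkx : 1 + k * x ≠ 0) :
    (systemJacobian a b c k m x ((1 - x) / c)).det =
      b * x * (1 - x) / (c * (1 + k * x)) * vquad a c k m x -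
        b * x * (1 + k) / (c * (1 + k * x) ^ 2) * ucubic a c k m x := by
  rw [systemJacobian, Matrix.det_fin_two_of, ucubic, vquad]
  rw [mul_comm k x] at hkx ⊢
  field_simp
  ring

theorem det_jacobian_eq_at_positive_equilibrium_general
    (a b c k m x y : ℝ) (hc : 0 < c)
    (hk : 0 < k) (hx0 : 0 < x)
    (hy : y = (1 - x) / c) (hu : ucubic a c k m x = 0) :
    (systemJacobian a b c k m x y).det =
      -(x * (x - 1) * b / ((k * x + 1) * c)) * vquad a c k m x := by
  subst hy
  rw [det_systemJacobian_on_prey_nullcline a b c k m x hc.ne' (by positivity), hu]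
  ring

/-- **Determinant formula (19) at a positive equilibrium of system (2).**
If 0 < x < 1, y = (1−x)/c and u(x) = 0 (so (x,y) is a positive equilibrium),
then det J(x,y) = −(x·(x−1)·b/((k·x+1)·c))·v(x), where v = u'. -/
theorem det_jacobian_eq_at_positive_equilibrium
    (a b c k m x y : ℝ) (ha : 0 < a) (hb : 0 < b) (hc : 0 < c)
    (hk : 0 < k) (hm : 0 < m) (hx0 : 0 < x) (hx1 : x < 1)
    (hy : y = (1 - x) / c) (hu : ucubic a c k m x = 0) :
    (systemJacobian a b c k m x y).det =
      -(x * (x - 1) * b / ((k * x + 1) * c)) * vquad a c k m x :=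
  det_jacobian_eq_at_positive_equilibrium_general a b c k m x y hc hk hx0 hy hu
end

section
/- Let a,b,c,k,m > 0, let 0 < x < 1, set y = (1−x)/c, and suppose u(x) = 0 and v(x) < 0. Then det J(x,y) < 0; that is, the positive equilibrium is a (hyperbolic) saddle of system (2). -/
/-! On the prey nullcline `y = (1 - x) / c` the determinant of the Jacobian splits into a
multiple of `v(x)` and a multiple of `u(x)`; at an equilibrium `u(x) = 0`, so the sign of the
determinant is the sign of `v(x)`. -/

theorem systemJacobian_det_on_prey_nullcline {a b c k m x : ℝ} (hc : c ≠ 0)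
    (hD : 1 + k * x ≠ 0) :
    (systemJacobian a b c k m x ((1 - x) / c)).det =
      b * x * ((1 - x) / c) * vquad a c k m x / (1 + k * x) -
        (1 + k) * b * x * ucubic a c k m x / (c * (1 + k * x) ^ 2) := by
  -- `field_simp` looks for the denominator in its normal form `1 + x * k`
  have hD' : 1 + x * k ≠ 0 := by rwa [mul_comm]
  simp only [systemJacobian, Matrix.det_fin_two_of, ucubic, vquad]
  field_simp
  ring

theorem positive_equilibrium_saddle_general
    (a b c k m x y : ℝ) (hb : 0 < b) (hc : 0 < c)
    (hk : 0 < k) (hx0 : 0 < x) (hx1 : x < 1)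
    (hy : y = (1 - x) / c) (hu : ucubic a c k m x = 0)
    (hv : vquad a c k m x < 0) :
    (systemJacobian a b c k m x y).det < 0 := by
  have hD : 0 < 1 + k * x := by positivity
  have hy0 : 0 < y := hy ▸ div_pos (sub_pos.2 hx1) hc
  rw [hy, systemJacobian_det_on_prey_nullcline hc.ne' hD.ne', hu, mul_zero, zero_div,
    sub_zero, ← hy]
  exact div_neg_of_neg_of_pos (mul_neg_of_pos_of_neg (by positivity) hv) hD

/-- **A positive equilibrium with v(x) < 0 is a saddle.**
If 0 < x < 1, y = (1−x)/c, u(x) = 0 and v(x) < 0, then det J(x,y) < 0;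
that is, the positive equilibrium is a hyperbolic saddle of system (2). -/
theorem positive_equilibrium_saddle
    (a b c k m x y : ℝ) (ha : 0 < a) (hb : 0 < b) (hc : 0 < c)
    (hk : 0 < k) (hm : 0 < m) (hx0 : 0 < x) (hx1 : x < 1)
    (hy : y = (1 - x) / c) (hu : ucubic a c k m x = 0)
    (hv : vquad a c k m x < 0) :
    (systemJacobian a b c k m x y).det < 0 :=
  positive_equilibrium_saddle_general a b c k m x y hb hc hk hx0 hx1 hy hu hv
end

section
/- Let a,b,c,k,m > 0, let 0 < x < 1, set y = (1−x)/c, and suppose u(x) = 0 and v(x) > 0. Then det J(x,y) > 0 and trace J(x,y) < 0 (indeed trace J(x,y) = −b·x − y·(1+m·x)); that is, the positive equilibrium is a (hyperbolic) stable node of system (2). -/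
section Equilibrium

variable {a b c k m x y : ℝ}

lemma ucubic_eq_on_prey_nullcline (hcy : c * y = 1 - x) :
    ucubic a c k m x = c * (1 - (y + a * x + m * x * y) * (1 + k * x)) := by
  unfold ucubic
  linear_combination ((1 + m * x) * (1 + k * x)) * hcy

lemma vquad_eq_on_prey_nullcline (hcy : c * y = 1 - x) :
    vquad a c k m x =
      (1 + k * x) * (1 + m * x - a * c - c * m * y) - c * k * (y + a * x + m * x * y) := by
  unfold vquad
  linear_combination (k + m + 2 * k * m * x) * hcy

lemma predator_nullcline_of_ucubic_eq_zero (hc : c ≠ 0) (hcy : c * y = 1 - x)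
    (hu : ucubic a c k m x = 0) : (y + a * x + m * x * y) * (1 + k * x) = 1 := by
  rw [ucubic_eq_on_prey_nullcline hcy, mul_eq_zero, sub_eq_zero] at hu
  exact hu.resolve_left hc |>.symm

lemma trace_systemJacobian_of_equilibrium (hcy : c * y = 1 - x)
    (hs : (y + a * x + m * x * y) * (1 + k * x) = 1) :
    (systemJacobian a b c k m x y).trace = -b * x - y * (1 + m * x) := by
  rw [systemJacobian, Matrix.trace_fin_two_of, ← eq_one_div_of_mul_eq_one_left hs]
  linear_combination (-b) * hcy

lemma det_systemJacobian_of_equilibrium (hcy : c * y = 1 - x)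
    (hs : (y + a * x + m * x * y) * (1 + k * x) = 1) :
    (systemJacobian a b c k m x y).det =
      b * x * y * (y + a * x + m * x * y) * vquad a c k m x := by
  have hk_div : k / (1 + k * x) ^ 2 = k * (y + a * x + m * x * y) ^ 2 := by
    rw [div_eq_mul_one_div, ← one_div_pow, ← eq_one_div_of_mul_eq_one_left hs]
  rw [systemJacobian, Matrix.det_fin_two_of, hk_div, ← eq_one_div_of_mul_eq_one_left hs,
    vquad_eq_on_prey_nullcline hcy]
  linear_combination b * y * (1 + m * x) * hcy
    - (b * x * y * (1 + m * x - a * c - c * m * y)) * hs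

end Equilibrium

theorem positive_equilibrium_stable_node_general
    (a b c k m x y : ℝ) (hb : 0 < b) (hc : 0 < c)
    (hk : 0 < k) (hm : 0 < m) (hx0 : 0 < x) (hx1 : x < 1)
    (hy : y = (1 - x) / c) (hu : ucubic a c k m x = 0)
    (hv : 0 < vquad a c k m x) :
    0 < (systemJacobian a b c k m x y).det ∧
      Matrix.trace (systemJacobian a b c k m x y) = -b * x - y * (1 + m * x) ∧
      Matrix.trace (systemJacobian a b c k m x y) < 0 := by
  have hy0 : 0 < y := hy ▸ div_pos (by linarith) hc
  have hcy : c * y = 1 - x := by rw [hy, mul_div_cancel₀ _ hc.ne']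
  have hs := predator_nullcline_of_ucubic_eq_zero hc.ne' hcy hu
  have hs0 : 0 < y + a * x + m * x * y :=
    pos_of_mul_pos_left (hs ▸ one_pos) (by positivity)
  have htr := trace_systemJacobian_of_equilibrium (b := b) hcy hs
  refine ⟨?_, htr, ?_⟩
  · rw [det_systemJacobian_of_equilibrium hcy hs]
    positivity
  · have hbx : 0 < b * x := mul_pos hb hx0
    have hy_mx : 0 < y * (1 + m * x) := by positivity
    linarith

/-- **A positive equilibrium with v(x) > 0 is a stable node.**
If 0 < x < 1, y = (1−x)/c, u(x) = 0 and v(x) > 0, then det J(x,y) > 0 and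
trace J(x,y) = −b·x − y·(1+m·x) < 0; that is, the positive equilibrium is a
hyperbolic stable node of system (2). -/
theorem positive_equilibrium_stable_node
    (a b c k m x y : ℝ) (ha : 0 < a) (hb : 0 < b) (hc : 0 < c)
    (hk : 0 < k) (hm : 0 < m) (hx0 : 0 < x) (hx1 : x < 1)
    (hy : y = (1 - x) / c) (hu : ucubic a c k m x = 0)
    (hv : 0 < vquad a c k m x) :
    0 < (systemJacobian a b c k m x y).det ∧
      Matrix.trace (systemJacobian a b c k m x y) = -b * x - y * (1 + m * x) ∧
      Matrix.trace (systemJacobian a b c k m x y) < 0 :=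
  positive_equilibrium_stable_node_general a b c k m x y hb hc hk hm hx0 hx1 hy hu hv
end

section
/- Let a,b,c,k,m > 0 with 0 < a < 1, 0 < c < 1 and 0 < k < 1/a − 1. Then the cubic u has exactly one root in the open interval (0,1); equivalently, system (2) has exactly one positive equilibrium (x*, y*) with 0 < x* < 1 and y* = (1−x*)/c > 0. -/
/-!
`u(0) = c - 1 < 0`, `u(1) = c (1 - a (1 + k)) > 0` and `u(-1/k) = c > 0`, so `u` has a root in
`(0, 1)` and a negative root `r`. If it had two roots `s ≠ t` in `(0, 1)`, Vieta's formula for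
the constant term would give `c - 1 = -k m r s t > 0`, a contradiction. On the line
`y = (1 - x) / c` the first equation of the system holds identically, and the second one
reduces to `u(x) = 0` after multiplying by `c (1 + k x)`.
-/

theorem cubic_const_eq_of_roots {K : Type*} [Field K] {A₁ A₂ A₃ A₄ r s t : K}
    (hrs : r ≠ s) (hrt : r ≠ t) (hst : s ≠ t)
    (hr : A₁ * r ^ 3 + A₂ * r ^ 2 + A₃ * r + A₄ = 0)
    (hs : A₁ * s ^ 3 + A₂ * s ^ 2 + A₃ * s + A₄ = 0)
    (ht : A₁ * t ^ 3 + A₂ * t ^ 2 + A₃ * t + A₄ = 0) :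
    A₄ = -(A₁ * r * s * t) := by
  have key : (A₄ + A₁ * r * s * t) * ((r - s) * (r - t) * (s - t)) = 0 := by
    linear_combination (s * t * (s - t)) * hr - (r * t * (r - t)) * hs + (r * s * (r - s)) * ht
  have hne : (r - s) * (r - t) * (s - t) ≠ 0 := by
    simp only [ne_eq, mul_eq_zero, sub_eq_zero, not_or]
    exact ⟨⟨hrs, hrt⟩, hst⟩
  linear_combination (mul_eq_zero.mp key).resolve_right hne

theorem cubic_pos_root_unique {A₁ A₂ A₃ A₄ r s t : ℝ} (hA₁ : 0 ≤ A₁) (hA₄ : A₄ < 0)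
    (hr_neg : r < 0) (hr : A₁ * r ^ 3 + A₂ * r ^ 2 + A₃ * r + A₄ = 0)
    (hs_pos : 0 < s) (hs : A₁ * s ^ 3 + A₂ * s ^ 2 + A₃ * s + A₄ = 0)
    (ht_pos : 0 < t) (ht : A₁ * t ^ 3 + A₂ * t ^ 2 + A₃ * t + A₄ = 0) :
    s = t := by
  by_contra hst
  have hA₄_eq := cubic_const_eq_of_roots (by linarith) (by linarith) hst hr hs ht
  have : A₁ * r * s * t ≤ 0 :=
    mul_nonpos_of_nonpos_of_nonneg
      (mul_nonpos_of_nonpos_of_nonneg (mul_nonpos_of_nonneg_of_nonpos hA₁ hr_neg.le) hs_pos.le)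
      ht_pos.le
  linarith

theorem continuous_ucubic (a c k m : ℝ) : Continuous (ucubic a c k m) := by
  unfold ucubic
  fun_prop

section ucubic

variable {a c k m : ℝ}

theorem ucubic_zero : ucubic a c k m 0 = c - 1 := by
  simp [ucubic]

theorem ucubic_one : ucubic a c k m 1 = c * (1 - a * (1 + k)) := by
  rw [ucubic]
  ring

theorem ucubic_neg_inv (hk : k ≠ 0) : ucubic a c k m (-k⁻¹) = c := by
  rw [ucubic]
  field_simp
  ring

theorem ucubic_eq_mul_of_ne_zero {x : ℝ} (hc : c ≠ 0) (hkx : 1 + k * x ≠ 0) :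
    ucubic a c k m x = c * (1 + k * x) *
      (1 / (1 + k * x) - (1 - x) / c - a * x - m * x * ((1 - x) / c)) := by
  rw [ucubic]
  field_simp
  ring

theorem exists_ucubic_root_neg (hc : 0 < c) (hc1 : c < 1) (hk : 0 < k) :
    ∃ r < 0, ucubic a c k m r = 0 := by
  have hle : -k⁻¹ ≤ 0 := neg_nonpos.mpr (inv_pos.mpr hk).le
  have hsign : (0 : ℝ) ∈ Set.Ioo (ucubic a c k m 0) (ucubic a c k m (-k⁻¹)) := by
    rw [ucubic_zero, ucubic_neg_inv hk.ne']
    exact ⟨by linarith, hc⟩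
  obtain ⟨r, hr, hr_root⟩ :=
    intermediate_value_Ioo' hle (continuous_ucubic a c k m).continuousOn hsign
  exact ⟨r, hr.2, hr_root⟩

theorem existsUnique_ucubic_root_Ioo (ha : 0 < a) (hc : 0 < c) (hc1 : c < 1) (hk : 0 < k)
    (hk1 : k < 1 / a - 1) (hm : 0 < m) :
    ∃! x : ℝ, x ∈ Set.Ioo (0 : ℝ) 1 ∧ ucubic a c k m x = 0 := by
  have hak : a * (1 + k) < 1 := by
    rw [lt_sub_iff_add_lt, lt_div_iff₀ ha] at hk1
    linarith
  have hsign : (0 : ℝ) ∈ Set.Ioo (ucubic a c k m 0) (ucubic a c k m 1) := by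
    rw [ucubic_zero, ucubic_one]
    exact ⟨by linarith, mul_pos hc (by linarith)⟩
  obtain ⟨x, hx, hx_root⟩ :=
    intermediate_value_Ioo zero_le_one (continuous_ucubic a c k m).continuousOn hsign
  obtain ⟨r, hr_neg, hr_root⟩ := exists_ucubic_root_neg (a := a) (m := m) hc hc1 hk
  refine ⟨x, ⟨hx, hx_root⟩, fun y ⟨hy, hy_root⟩ => ?_⟩
  unfold ucubic at hr_root hx_root hy_root
  exact cubic_pos_root_unique (mul_pos hk hm).le (by linarith) hr_neg hr_root hy.1 hy_root
    hx.1 hx_root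

theorem equilibrium_iff_ucubic_eq_zero {b x : ℝ} (hc : 0 < c) (hk : 0 < k)
    (hx : x ∈ Set.Ioo (0 : ℝ) 1) :
    (b * x * (1 - x - c * ((1 - x) / c)) = 0 ∧
      (1 - x) / c * (1 / (1 + k * x) - (1 - x) / c - a * x - m * x * ((1 - x) / c)) = 0) ↔
      ucubic a c k m x = 0 := by
  have hy : 0 < (1 - x) / c := div_pos (by linarith [hx.2]) hc
  have hkx : 0 < 1 + k * x := by nlinarith [hx.1]
  rw [ucubic_eq_mul_of_ne_zero hc.ne' hkx.ne', mul_div_cancel₀ _ hc.ne', sub_self, mul_zero,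
    mul_eq_zero, mul_eq_zero, or_iff_right hy.ne', or_iff_right (mul_pos hc hkx).ne']
  exact and_iff_right rfl

end ucubic

theorem unique_positive_equilibrium_general
    (a b c k m : ℝ) (ha : 0 < a) (hc : 0 < c) (hc1 : c < 1) (hk : 0 < k) (hk1 : k < 1 / a - 1)
    (hm : 0 < m) :
    (∃! x : ℝ, x ∈ Set.Ioo (0 : ℝ) 1 ∧ ucubic a c k m x = 0) ∧
      (∃! p : ℝ × ℝ, 0 < p.1 ∧ p.1 < 1 ∧ p.2 = (1 - p.1) / c ∧ 0 < p.2 ∧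
        b * p.1 * (1 - p.1 - c * p.2) = 0 ∧
        p.2 * (1 / (1 + k * p.1) - p.2 - a * p.1 - m * p.1 * p.2) = 0) := by
  have hroot := existsUnique_ucubic_root_Ioo ha hc hc1 hk hk1 hm
  refine ⟨hroot, ?_⟩
  obtain ⟨x, ⟨hx, hx_root⟩, hx_unique⟩ := hroot
  refine ⟨(x, (1 - x) / c), ⟨hx.1, hx.2, rfl, div_pos (by linarith [hx.2]) hc,
    (equilibrium_iff_ucubic_eq_zero (b := b) hc hk hx).mpr hx_root⟩, ?_⟩
  rintro ⟨y, z⟩ ⟨hy₀, hy₁, hz, -, hy_eq⟩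
  dsimp only at hy₀ hy₁ hz hy_eq
  subst hz
  have hy_root := (equilibrium_iff_ucubic_eq_zero hc hk ⟨hy₀, hy₁⟩).mp hy_eq
  rw [hx_unique y ⟨⟨hy₀, hy₁⟩, hy_root⟩]

/-- **Unique positive equilibrium in the weak-competition regime.**
If a,b,c,k,m > 0 with 0 < a < 1, 0 < c < 1 and 0 < k < 1/a − 1, then the cubic
u has exactly one root in (0,1); equivalently, system (2) has exactly one
positive equilibrium (x*, y*) with 0 < x* < 1 and y* = (1−x*)/c > 0. -/
theorem unique_positive_equilibrium
    (a b c k m : ℝ) (ha : 0 < a) (ha1 : a < 1) (hb : 0 < b)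
    (hc : 0 < c) (hc1 : c < 1) (hk : 0 < k) (hk1 : k < 1 / a - 1) (hm : 0 < m) :
    (∃! x : ℝ, x ∈ Set.Ioo (0 : ℝ) 1 ∧ ucubic a c k m x = 0) ∧
      (∃! p : ℝ × ℝ, 0 < p.1 ∧ p.1 < 1 ∧ p.2 = (1 - p.1) / c ∧ 0 < p.2 ∧
        b * p.1 * (1 - p.1 - c * p.2) = 0 ∧
        p.2 * (1 / (1 + k * p.1) - p.2 - a * p.1 - m * p.1 * p.2) = 0) :=
  unique_positive_equilibrium_general a b c k m ha hc hc1 hk hk1 hm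
end

section
/- Let a,b,c,k,m > 0. For all x > 0 and y > 0, the divergence of the Dulac-rescaled vector field of system (2) satisfies ∂/∂x [F(x,y)/(x·y)] + ∂/∂y [G(x,y)/(x·y)] = −b/y − (m·x + 1)/x, and this quantity is strictly negative. -/
/-!
Away from the axes the factor `s` cancels in each quotient, so `F/(xy)` is affine in `x` with
slope `-b/y` and `G/(xy)` is affine in `y` with slope `-(1 + m x)/x`; both slopes are negative.
-/

open Topology

theorem deriv_mul_div_mul_left (g : ℝ → ℝ) (d : ℝ) {x : ℝ} (hx : x ≠ 0) :
    deriv (fun s => s * g s / (s * d)) x = deriv g x / d := by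
  have hcancel : (fun s => s * g s / (s * d)) =ᶠ[𝓝 x] fun s => g s / d := by
    filter_upwards [eventually_ne_nhds hx] with s hs
    rw [mul_div_mul_left _ _ hs]
  rw [hcancel.deriv_eq, deriv_div_const]

theorem neg_div_sub_div_lt_zero {b y m x : ℝ} (hb : 0 < b) (hy : 0 < y) (hm : 0 ≤ m)
    (hx : 0 < x) :
    -b / y - (m * x + 1) / x < 0 := by
  have hby : 0 < b / y := by positivity
  have hmx : 0 < (m * x + 1) / x := by positivity
  rw [neg_div]
  linarith

theorem dulac_divergence_neg_general
    (a b c k m : ℝ) (hb : 0 < b)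
    (hm : 0 < m) (x y : ℝ) (hx : 0 < x) (hy : 0 < y) :
    deriv (fun s : ℝ => (b * s * (1 - s - c * y)) / (s * y)) x +
        deriv (fun s : ℝ =>
          (s * (1 / (1 + k * x) - s - a * x - m * x * s)) / (x * s)) y =
      -b / y - (m * x + 1) / x ∧
    -b / y - (m * x + 1) / x < 0 := by
  have hF : deriv (fun s : ℝ => (b * s * (1 - s - c * y)) / (s * y)) x = -b / y := by
    have hform : (fun s : ℝ => (b * s * (1 - s - c * y)) / (s * y)) =
        fun s => s * (b * (1 - c * y) - b * s) / (s * y) := by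
      funext s; ring
    rw [hform, deriv_mul_div_mul_left _ _ hx.ne']
    simp [neg_div]
  have hG : deriv (fun s : ℝ =>
      (s * (1 / (1 + k * x) - s - a * x - m * x * s)) / (x * s)) y = -(m * x + 1) / x := by
    have hform : (fun s : ℝ => (s * (1 / (1 + k * x) - s - a * x - m * x * s)) / (x * s)) =
        fun s => s * (1 / (1 + k * x) - a * x - (m * x + 1) * s) / (s * x) := by
      funext s; ring
    rw [hform, deriv_mul_div_mul_left _ _ hy.ne']
    simp
  refine ⟨?_, neg_div_sub_div_lt_zero hb hy hm.le hx⟩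
  rw [hF, hG]
  ring

/-- **Divergence of the Dulac-rescaled vector field of system (2).**
With the Dulac function B(x,y) = 1/(x·y), for all x > 0 and y > 0 we have
∂/∂x [F(x,y)/(x·y)] + ∂/∂y [G(x,y)/(x·y)] = −b/y − (m·x+1)/x < 0, where
F(x,y) = b·x·(1−x−c·y) and G(x,y) = y·(1/(1+k·x) − y − a·x − m·x·y). -/
theorem dulac_divergence_neg
    (a b c k m : ℝ) (ha : 0 < a) (hb : 0 < b) (hc : 0 < c)
    (hk : 0 < k) (hm : 0 < m) (x y : ℝ) (hx : 0 < x) (hy : 0 < y) :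
    deriv (fun s : ℝ => (b * s * (1 - s - c * y)) / (s * y)) x +
        deriv (fun s : ℝ =>
          (s * (1 / (1 + k * x) - s - a * x - m * x * s)) / (x * s)) y =
      -b / y - (m * x + 1) / x ∧
    -b / y - (m * x + 1) / x < 0 :=
  dulac_divergence_neg_general a b c k m hb hm x y hx hy
end

section
/- Consider system (2) with parameters a,b,c,k,m > 0. If x,y : ℝ → ℝ are differentiable, satisfy x'(t) = F(x(t),y(t)) and y'(t) = G(x(t),y(t)) for all t ∈ ℝ, satisfy x(t) > 0 and y(t) > 0 for all t ∈ ℝ, and are periodic with some period T > 0 (x(t+T)=x(t) and y(t+T)=y(t) for all t), then x and y are constant functions. In other words, system (2) has no nonconstant periodic orbit in the open positive quadrant. -/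
/-!
The velocity `(x', y')` of a solution solves the variational equation, a linear system whose
off-diagonal coefficients `-b c x` and `-y (k / (1 + k x)² + a + m y)` are negative: the system
is competitive. For such a linear system, a solution starting on the boundary of the quadrant
`{u ≤ 0 ≤ w}` away from the origin enters its interior and never leaves it (likewise for the
opposite quadrant). By Rolle `x'` vanishes at some time `τ`. Either `(x', y')` vanishes at `τ`,
and uniqueness for the linear system (Grönwall) makes it vanish identically, or `x'` has a strict
sign after `τ`, which a periodic `x` cannot have.
-/

open Set Filter Topology

theorem eq_zero_of_norm_deriv_le_mul_norm_of_eq_zero_right {E : Type*} [NormedAddCommGroup E]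
    [NormedSpace ℝ E] {f f' : ℝ → E} {K : ℝ → ℝ} (hK : Continuous K)
    (hf : ∀ t, HasDerivAt f (f' t) t) (bound : ∀ t, ‖f' t‖ ≤ K t * ‖f t‖) {τ t : ℝ}
    (hτ : f τ = 0) (ht : τ ≤ t) : f t = 0 := by
  obtain ⟨C, hC⟩ := isCompact_Icc.exists_bound_of_continuousOn (hK.continuousOn (s := Icc τ t))
  refine eq_zero_of_abs_deriv_le_mul_abs_self_of_eq_zero_right (K := C)
    (fun s _ => (hf s).continuousAt.continuousWithinAt) (fun s _ => (hf s).hasDerivWithinAt) hτ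
    (fun s hs => ?_) t ⟨ht, le_rfl⟩
  calc ‖f' s‖ ≤ K s * ‖f s‖ := bound s
    _ ≤ C * ‖f s‖ := by
      gcongr
      exact (le_abs_self _).trans (hC s (Ico_subset_Icc_self hs))

theorem eq_zero_of_norm_deriv_le_mul_norm_of_eq_zero {E : Type*} [NormedAddCommGroup E]
    [NormedSpace ℝ E] {f f' : ℝ → E} {K : ℝ → ℝ} (hK : Continuous K)
    (hf : ∀ t, HasDerivAt f (f' t) t) (bound : ∀ t, ‖f' t‖ ≤ K t * ‖f t‖) {τ : ℝ}
    (hτ : f τ = 0) (t : ℝ) : f t = 0 := by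
  rcases le_total τ t with ht | ht
  · exact eq_zero_of_norm_deriv_le_mul_norm_of_eq_zero_right hK hf bound hτ ht
  · simpa using eq_zero_of_norm_deriv_le_mul_norm_of_eq_zero_right (f := fun s => f (-s))
      (f' := fun s => -f' (-s)) (K := fun s => K (-s)) (by fun_prop)
      (fun s => by simpa [Function.comp_def] using (hf (-s)).scomp s (hasDerivAt_neg s))
      (fun s => by simpa using bound (-s)) (by simpa using hτ) (neg_le_neg ht)

theorem HasDerivAt.eventually_nhdsGT_nonpos {f : ℝ → ℝ} {d x : ℝ} (hf : HasDerivAt f d x)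
    (hfx : f x ≤ 0) (hd : f x = 0 → d < 0) : ∀ᶠ t in 𝓝[>] x, f t ≤ 0 := by
  rcases hfx.lt_or_eq with hlt | heq
  · exact ((hf.continuousAt.eventually_lt continuousAt_const hlt).filter_mono
      nhdsWithin_le_nhds).mono fun _ h => h.le
  · have hslope : ∀ᶠ t in 𝓝[>] x, slope f x t < 0 :=
      ((hasDerivAt_iff_tendsto_slope.mp hf).mono_left (nhdsGT_le_nhdsNE x)).eventually
        (eventually_lt_nhds (hd heq))
    filter_upwards [hslope, self_mem_nhdsWithin] with t hst hxt
    exact (heq ▸ (slope_neg_iff_of_le (le_of_lt hxt)).mp hst).le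

theorem HasDerivAt.eventually_nhdsGT_nonneg {f : ℝ → ℝ} {d x : ℝ} (hf : HasDerivAt f d x)
    (hfx : 0 ≤ f x) (hd : f x = 0 → 0 < d) : ∀ᶠ t in 𝓝[>] x, 0 ≤ f t := by
  simpa using hf.neg.eventually_nhdsGT_nonpos (by simpa using hfx) (by simpa using hd)

theorem Function.Periodic.not_forall_deriv_neg {f : ℝ → ℝ} {T : ℝ}
    (hf : Function.Periodic f T) (hT : 0 < T) (hc : Continuous f) (τ : ℝ) :
    ¬ ∀ t, τ < t → deriv f t < 0 := fun h => by
  have := strictAntiOn_of_deriv_neg (convex_Ici τ) hc.continuousOn (by simpa using h)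
    self_mem_Ici (by simpa using hT.le : τ + T ∈ Ici τ) (by linarith)
  exact (hf τ ▸ this).false

theorem Function.Periodic.not_forall_deriv_pos {f : ℝ → ℝ} {T : ℝ}
    (hf : Function.Periodic f T) (hT : 0 < T) (hc : Continuous f) (τ : ℝ) :
    ¬ ∀ t, τ < t → 0 < deriv f t := fun h => by
  have := strictMonoOn_of_deriv_pos (convex_Ici τ) hc.continuousOn (by simpa using h)
    self_mem_Ici (by simpa using hT.le : τ + T ∈ Ici τ) (by linarith)
  exact (hf τ ▸ this).false

namespace LinearPlanarSystem

variable {P Q R S u w : ℝ → ℝ}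

theorem eq_zero_of_eq_zero (hu : ∀ t, HasDerivAt u (P t * u t + Q t * w t) t)
    (hw : ∀ t, HasDerivAt w (R t * u t + S t * w t) t)
    (hPc : Continuous P) (hQc : Continuous Q)
    (hRc : Continuous R) (hSc : Continuous S) {τ : ℝ} (hτ : u τ = 0 ∧ w τ = 0) (t : ℝ) :
    u t = 0 ∧ w t = 0 := by
  have abs_comb_le (p q a b : ℝ) : |p * a + q * b| ≤ (|p| + |q|) * max |a| |b| := by
    calc |p * a + q * b| ≤ |p| * |a| + |q| * |b| := by
          rw [← abs_mul, ← abs_mul]; exact abs_add_le _ _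
      _ ≤ |p| * max |a| |b| + |q| * max |a| |b| := by gcongr <;> simp
      _ = _ := by ring
  have bound (t : ℝ) : ‖(P t * u t + Q t * w t, R t * u t + S t * w t)‖ ≤
      (|P t| + |Q t| + |R t| + |S t|) * ‖(u t, w t)‖ := by
    simp only [Prod.norm_def, Real.norm_eq_abs]
    refine max_le ((abs_comb_le _ _ _ _).trans ?_) ((abs_comb_le _ _ _ _).trans ?_) <;>
      refine mul_le_mul_of_nonneg_right ?_ (by positivity) <;>
      linarith [abs_nonneg (P t), abs_nonneg (Q t), abs_nonneg (R t), abs_nonneg (S t)]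
  simpa using eq_zero_of_norm_deriv_le_mul_norm_of_eq_zero (f := fun t => (u t, w t))
    (by fun_prop) (fun t => (hu t).prodMk (hw t)) bound (Prod.ext hτ.1 hτ.2) t

theorem nonpos_and_nonneg_of_le (hu : ∀ t, HasDerivAt u (P t * u t + Q t * w t) t)
    (hw : ∀ t, HasDerivAt w (R t * u t + S t * w t) t)
    (hQ : ∀ t, Q t < 0) (hR : ∀ t, R t < 0)
    (hnv : ∀ t, u t = 0 → w t ≠ 0) {τ : ℝ} (hu₀ : u τ ≤ 0) (hw₀ : 0 ≤ w τ)
    {t : ℝ} (ht : τ ≤ t) : u t ≤ 0 ∧ 0 ≤ w t := by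
  have hcu : Continuous u := continuous_iff_continuousAt.2 fun t => (hu t).continuousAt
  have hcw : Continuous w := continuous_iff_continuousAt.2 fun t => (hw t).continuousAt
  have hs : IsClosed {t | u t ≤ 0 ∧ 0 ≤ w t} :=
    (isClosed_le hcu continuous_const).inter (isClosed_le continuous_const hcw)
  refine (hs.inter isClosed_Icc).Icc_subset_of_forall_mem_nhdsWithin ⟨hu₀, hw₀⟩
    (fun r ⟨⟨hur, hwr⟩, _⟩ => ?_) ⟨ht, le_rfl⟩
  refine ((hu r).eventually_nhdsGT_nonpos hur fun h => ?_).and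
    ((hw r).eventually_nhdsGT_nonneg hwr fun h => ?_)
  · rw [h, mul_zero, zero_add]
    exact mul_neg_of_neg_of_pos (hQ r) (hwr.lt_of_ne (hnv r h).symm)
  · rw [h, mul_zero, add_zero]
    exact mul_pos_of_neg_of_neg (hR r) (hur.lt_of_ne fun h' => hnv r h' h)

theorem neg_and_pos_of_lt (hu : ∀ t, HasDerivAt u (P t * u t + Q t * w t) t)
    (hw : ∀ t, HasDerivAt w (R t * u t + S t * w t) t)
    (hQ : ∀ t, Q t < 0) (hR : ∀ t, R t < 0)
    (hnv : ∀ t, u t = 0 → w t ≠ 0) {τ : ℝ} (hu₀ : u τ ≤ 0) (hw₀ : 0 ≤ w τ)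
    {t : ℝ} (ht : τ < t) : u t < 0 ∧ 0 < w t := by
  have hinv : ∀ s, τ ≤ s → u s ≤ 0 ∧ 0 ≤ w s :=
    fun s hs => nonpos_and_nonneg_of_le hu hw hQ hR hnv hu₀ hw₀ hs
  have hnear : ∀ᶠ s in 𝓝 t, u s ≤ 0 ∧ 0 ≤ w s :=
    (eventually_gt_nhds ht).mono fun s hs => hinv s hs.le
  obtain ⟨hut, hwt⟩ := hinv t ht.le
  refine ⟨hut.lt_of_ne fun h => ?_, hwt.lt_of_ne' fun h => ?_⟩
  · have hmax : IsLocalMax u t := hnear.mono fun s hs => h ▸ hs.1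
    have := hmax.hasDerivAt_eq_zero (hu t)
    rw [h, mul_zero, zero_add, mul_eq_zero] at this
    exact hnv t h (this.resolve_left (hQ t).ne)
  · have hmin : IsLocalMin w t := hnear.mono fun s hs => h ▸ hs.2
    have := hmin.hasDerivAt_eq_zero (hw t)
    rw [h, mul_zero, add_zero, mul_eq_zero] at this
    exact hnv t (this.resolve_left (hR t).ne) h

theorem forall_neg_or_forall_pos_or_eq_zero
    (hu : ∀ t, HasDerivAt u (P t * u t + Q t * w t) t)
    (hw : ∀ t, HasDerivAt w (R t * u t + S t * w t) t)
    (hPc : Continuous P) (hQc : Continuous Q) (hRc : Continuous R) (hSc : Continuous S)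
    (hQ : ∀ t, Q t < 0) (hR : ∀ t, R t < 0) {τ : ℝ} (hτ : u τ = 0) :
    (∀ t, τ < t → u t < 0) ∨ (∀ t, τ < t → 0 < u t) ∨ ∀ t, u t = 0 ∧ w t = 0 := by
  by_cases hnv : ∀ t, u t = 0 → w t ≠ 0
  · rcases le_total 0 (w τ) with hw₀ | hw₀
    · exact .inl fun t ht => (neg_and_pos_of_lt hu hw hQ hR hnv hτ.le hw₀ ht).1
    · have hu' (t : ℝ) : HasDerivAt (-u) (P t * (-u) t + Q t * (-w) t) t :=
        (hu t).neg.congr_deriv (by simp only [Pi.neg_apply]; ring)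
      have hw' (t : ℝ) : HasDerivAt (-w) (R t * (-u) t + S t * (-w) t) t :=
        (hw t).neg.congr_deriv (by simp only [Pi.neg_apply]; ring)
      have hnv' (t : ℝ) (h : (-u) t = 0) : (-w) t ≠ 0 := by
        simpa using hnv t (by simpa using h)
      exact .inr <| .inl fun t ht => by
        simpa using (neg_and_pos_of_lt hu' hw' hQ hR hnv' (by simp [hτ]) (by simpa using hw₀)
          ht).1
  · push Not at hnv
    obtain ⟨t₀, hu₀, hw₀⟩ := hnv
    exact .inr <| .inr <| eq_zero_of_eq_zero hu hw hPc hQc hRc hSc ⟨hu₀, hw₀⟩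

end LinearPlanarSystem

namespace CompetitionModel

variable {a b c k m : ℝ} {x y : ℝ → ℝ}

theorem hasDerivAt_deriv_x (hx : Differentiable ℝ x) (hy : Differentiable ℝ y)
    (hxeq : ∀ t, deriv x t = b * x t * (1 - x t - c * y t)) (t : ℝ) :
    HasDerivAt (deriv x)
      (b * (1 - 2 * x t - c * y t) * deriv x t + -(b * c * x t) * deriv y t) t := by
  have h : HasDerivAt (fun s => b * x s * (1 - x s - c * y s)) _ t :=
    ((hx t).hasDerivAt.const_mul b).mul
      (((hasDerivAt_const t 1).sub (hx t).hasDerivAt).sub ((hy t).hasDerivAt.const_mul c))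
  convert h using 1
  · exact funext hxeq
  · ring

theorem hasDerivAt_deriv_y (hx : Differentiable ℝ x) (hy : Differentiable ℝ y)
    (hyeq : ∀ t, deriv y t = y t * (1 / (1 + k * x t) - y t - a * x t - m * x t * y t))
    (hden : ∀ t, 1 + k * x t ≠ 0) (t : ℝ) :
    HasDerivAt (deriv y) (-(y t * (k / (1 + k * x t) ^ 2 + a + m * y t)) * deriv x t +
      (1 / (1 + k * x t) - 2 * y t - a * x t - 2 * m * x t * y t) * deriv y t) t := by
  have hx' := (hx t).hasDerivAt
  have hy' := (hy t).hasDerivAt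
  have h : HasDerivAt (fun s => y s * ((1 + k * x s)⁻¹ - y s - a * x s - m * x s * y s)) _ t :=
    hy'.mul (((((hasDerivAt_const t 1).add (hx'.const_mul k)).inv (hden t)).sub hy').sub
      (hx'.const_mul a) |>.sub ((hx'.const_mul m).mul hy'))
  convert h using 1
  · simpa only [one_div] using funext hyeq
  · simp only [Pi.add_apply]
    field_simp
    ring

theorem deriv_x_trichotomy (ha : 0 < a) (hb : 0 < b) (hc : 0 < c) (hk : 0 < k) (hm : 0 < m)
    (hx : Differentiable ℝ x) (hy : Differentiable ℝ y)
    (hxeq : ∀ t, deriv x t = b * x t * (1 - x t - c * y t))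
    (hyeq : ∀ t, deriv y t = y t * (1 / (1 + k * x t) - y t - a * x t - m * x t * y t))
    (hxpos : ∀ t, 0 < x t) (hypos : ∀ t, 0 < y t) {τ : ℝ} (hτ : deriv x τ = 0) :
    (∀ t, τ < t → deriv x t < 0) ∨ (∀ t, τ < t → 0 < deriv x t) ∨
      ∀ t, deriv x t = 0 ∧ deriv y t = 0 := by
  have hden (t : ℝ) : 1 + k * x t ≠ 0 := by have := hxpos t; positivity
  have hcx := hx.continuous
  have hcy := hy.continuous
  refine LinearPlanarSystem.forall_neg_or_forall_pos_or_eq_zero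
    (hasDerivAt_deriv_x hx hy hxeq) (hasDerivAt_deriv_y hx hy hyeq hden)
    (by fun_prop) (by fun_prop) (by fun_prop (disch := intro t; have := hxpos t; positivity))
    (by fun_prop (disch := intro t; have := hxpos t; positivity))
    (fun t => ?_) (fun t => ?_) hτ
  · have := hxpos t; exact neg_neg_of_pos (by positivity)
  · have := hypos t; exact neg_neg_of_pos (by positivity)

end CompetitionModel

/-- **No nonconstant periodic orbit in the open positive quadrant.**
Any positive periodic solution of system (2), i.e. of
x' = b·x·(1 − x − c·y), y' = y·(1/(1+k·x) − y − a·x − m·x·y) with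
a,b,c,k,m > 0, must be constant. -/
theorem no_periodic_orbit
    (a b c k m : ℝ) (ha : 0 < a) (hb : 0 < b) (hc : 0 < c)
    (hk : 0 < k) (hm : 0 < m) (x y : ℝ → ℝ)
    (hx : Differentiable ℝ x) (hy : Differentiable ℝ y)
    (hxeq : ∀ t : ℝ, deriv x t = b * x t * (1 - x t - c * y t))
    (hyeq : ∀ t : ℝ, deriv y t =
      y t * (1 / (1 + k * x t) - y t - a * x t - m * x t * y t))
    (hxpos : ∀ t : ℝ, 0 < x t) (hypos : ∀ t : ℝ, 0 < y t)
    (T : ℝ) (hT : 0 < T)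
    (hper : ∀ t : ℝ, x (t + T) = x t ∧ y (t + T) = y t) :
    (∀ t : ℝ, x t = x 0) ∧ (∀ t : ℝ, y t = y 0) := by
  have hperx : Function.Periodic x T := fun t => (hper t).1
  obtain ⟨τ, -, hτ⟩ :=
    exists_deriv_eq_zero hT hx.continuous.continuousOn (by simpa using (hperx 0).symm)
  rcases CompetitionModel.deriv_x_trichotomy ha hb hc hk hm hx hy hxeq hyeq hxpos hypos hτ
    with hneg | hpos | hzero
  · exact (hperx.not_forall_deriv_neg hT hx.continuous τ hneg).elim
  · exact (hperx.not_forall_deriv_pos hT hx.continuous τ hpos).elim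
  · exact ⟨fun t => is_const_of_deriv_eq_zero hx (fun s => (hzero s).1) t 0,
      fun t => is_const_of_deriv_eq_zero hy (fun s => (hzero s).2) t 0⟩
end

section
/- Let a,b,k,m > 0 and set c = 1 (the transcritical bifurcation threshold c_{TR} = 1 for system (2) at E₂ = (0,1)). Regard F(x,y,c) = b·x·(1 − x − c·y) as a function of (x,y,c). Then at the point (x,y,c) = (0,1,1): (i) ∂F/∂c = 0; (ii) the Sotomayor transversality quantity (−1/(a+k+m))·∂²F/∂c∂x + ∂²F/∂c∂y equals b/(a+k+m), which is nonzero; and (iii) the quantity (1/(a+k+m)²)·∂²F/∂x² − (2/(a+k+m))·∂²F/∂x∂y + ∂²F/∂y² equals 2b(a+k+m−1)/(a+k+m)², which is nonzero whenever m ≠ 1 − a − k. -/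
/-! F vanishes identically on the line x = 0, so every derivative at E₂ taken only in y and c
is zero; the remaining ones all come from F_x = b(1 − 2x − cy). -/

/-- The first component F(x,y,c) = b·x·(1 − x − c·y) of the vector field of
system (2), with the interspecific competition rate c as an explicit
variable. -/
noncomputable def Ffun (b : ℝ) (x y γ : ℝ) : ℝ :=
  b * x * (1 - x - γ * y)

@[simp]
lemma Ffun_zero_left (b y γ : ℝ) : Ffun b 0 y γ = 0 := by
  simp [Ffun]

lemma hasDerivAt_Ffun_x (b y γ x : ℝ) :
    HasDerivAt (fun x => Ffun b x y γ) (b * (1 - 2 * x - γ * y)) x := by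
  have h := ((hasDerivAt_id x).const_mul b).mul
    (((hasDerivAt_const x 1).sub (hasDerivAt_id x)).sub (hasDerivAt_const x (γ * y)))
  exact h.congr_deriv (by simp only [Pi.sub_apply, id]; ring)

lemma deriv_Ffun_x (b y γ : ℝ) :
    deriv (fun x => Ffun b x y γ) = fun x => b * (1 - 2 * x - γ * y) :=
  funext fun x => (hasDerivAt_Ffun_x b y γ x).deriv

/-- **Sotomayor transversality computations at E₂ = (0,1), c = c_{TR} = 1.**
(i) ∂F/∂c = 0;
(ii) (−1/(a+k+m))·∂²F/∂c∂x + ∂²F/∂c∂y = b/(a+k+m) ≠ 0;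
(iii) (1/(a+k+m)²)·∂²F/∂x² − (2/(a+k+m))·∂²F/∂x∂y + ∂²F/∂y²
      = 2b(a+k+m−1)/(a+k+m)², which is nonzero whenever m ≠ 1 − a − k;
all evaluated at (x,y,c) = (0,1,1). -/
theorem transcritical_transversality_E2
    (a b k m : ℝ) (ha : 0 < a) (hb : 0 < b) (hk : 0 < k) (hm : 0 < m) :
    deriv (fun γ : ℝ => Ffun b 0 1 γ) 1 = 0 ∧
    (-(1 / (a + k + m)) *
          deriv (fun γ : ℝ => deriv (fun x : ℝ => Ffun b x 1 γ) 0) 1 +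
        deriv (fun γ : ℝ => deriv (fun y : ℝ => Ffun b 0 y γ) 1) 1 =
      b / (a + k + m) ∧ b / (a + k + m) ≠ 0) ∧
    ((1 / (a + k + m) ^ 2) * deriv (deriv (fun x : ℝ => Ffun b x 1 1)) 0 -
        (2 / (a + k + m)) *
          deriv (fun y : ℝ => deriv (fun x : ℝ => Ffun b x y 1) 0) 1 +
        deriv (deriv (fun y : ℝ => Ffun b 0 y 1)) 1 =
      2 * b * (a + k + m - 1) / (a + k + m) ^ 2 ∧
      (m ≠ 1 - a - k → 2 * b * (a + k + m - 1) / (a + k + m) ^ 2 ≠ 0)) := by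
  have hs : a + k + m ≠ 0 := by positivity
  have hFcx : deriv (fun γ : ℝ => deriv (fun x : ℝ => Ffun b x 1 γ) 0) 1 = -b := by
    simp [deriv_Ffun_x]
  have hFxx : deriv (deriv (fun x : ℝ => Ffun b x 1 1)) 0 = -(2 * b) := by
    simp [deriv_Ffun_x, mul_comm]
  have hFxy : deriv (fun y : ℝ => deriv (fun x : ℝ => Ffun b x y 1) 0) 1 = -b := by
    simp [deriv_Ffun_x]
  refine ⟨by simp, ⟨?_, div_ne_zero hb.ne' hs⟩, ?_, fun hne => ?_⟩
  · simp only [hFcx, Ffun_zero_left, deriv_const']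
    ring
  · simp only [hFxx, hFxy, Ffun_zero_left, deriv_const']
    field_simp
    ring
  · have : a + k + m - 1 ≠ 0 := fun h => hne (by linarith)
    positivity
end
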